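/- There is no connected k-regular graph with spectrum {[k]^1, [−1]^1, [α]^m, [β]^{n−2−m}} where α and β are non-integral (quadratic irrational conjugates) and 2 ≤ m ≤ n−4: the forced values n = 2k, α = (−1+√(2k+1))/2, β = (−1−√(2k+1))/2 together with the half-partition common-neighbor formula yield |N(u)∩N(v)| = k/2 − 1 for adjacent u, v in the same part, which is not an integer since k must be odd (as (k−1)/2 ∈ ℤ). -/

import Mathlib

open Polynomial

noncomputable def adjm {V : Type*} [Fintype V] [DecidableEq V] (G : SimpleGraph V) :
    Matrix V V ℝ :=
  @SimpleGraph.adjMatrix ℝ V G (Classical.decRel _) _ _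

/-- The adjacency spectrum of `G`, as a multiset of real roots of the
characteristic polynomial (so multiplicities are counted). -/
noncomputable def spec {V : Type*} [Fintype V] [DecidableEq V] (G : SimpleGraph V) :
    Multiset ℝ :=
  (adjm G).charpoly.roots

/-- `G` is `k`-regular: every vertex has exactly `k` neighbours. -/
def IsReg {V : Type*} (G : SimpleGraph V) (k : ℕ) : Prop :=
  ∀ v : V, (G.neighborSet v).ncard = k

/-!
Write `A` for the adjacency matrix. The eigenvalue `α` is an algebraic integer but not an integer,
so its conjugates are non-integral eigenvalues: `α` and `β` are the two roots of a monic integral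
quadratic `x ^ 2 - a x + b`. The trace identities `tr A = 0` and `tr A ^ 2 = n k`, together with
the irrationality of `α`, force equal multiplicities, `n = 2 m + 2`, and then either `a = 0`,
`b = -1` (impossible: `α = ±1`) or `a = -1`, `2 b = -k`, so that `k` is even.

On the other hand `A ^ 2 + A + b` vanishes on the `α`- and `β`-eigenspaces and has constant
diagonal `k + b`; comparing with its spectral decomposition shows that a unit `(-1)`-eigenvector
`x` has `|x u|` independent of `u`. Reading `A x = -x` at a vertex `u` then gives
`-1 = k - 2 #{v ~ u | x v ≠ x u}`, so `k` is odd.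
-/

open Matrix Finset

/-- The integral form of the trace identities for the spectrum `{k, -1, α ^ m, β ^ m}` on
`2 m + 2` vertices, with `a = α + β`, `b = α β`. -/
theorem Int.eq_of_trace_identities {m k a b : ℤ} (hm : 0 < m) (h1 : k - 1 + m * a = 0)
    (h2 : k ^ 2 + 1 + m * (a ^ 2 - 2 * b) = (2 * m + 2) * k) (hD : 0 < a ^ 2 - 4 * b) :
    (a = 0 ∧ b = -1) ∨ (a = -1 ∧ 2 * b = -k) := by
  obtain rfl : k = 1 - m * a := by linarith
  have hb : 2 * b = (m + 1) * a ^ 2 + 2 * m * a - 2 := by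
    have : m * (2 * b - ((m + 1) * a ^ 2 + 2 * m * a - 2)) = 0 := by linear_combination -h2
    linarith [(mul_eq_zero.mp this).resolve_left hm.ne']
  have hlt : a * ((2 * m + 1) * a + 4 * m) < 4 := by nlinarith
  obtain rfl | rfl : a = 0 ∨ a = -1 := by
    rcases lt_trichotomy a 0 with h | h | h
    · by_contra! hne
      have ha : 0 ≤ -a - 2 := by omega
      have ha' : 0 ≤ -((2 * m + 1) * a + 4 * m) - 2 := by nlinarith
      nlinarith [mul_nonneg ha ha']
    · exact Or.inl h
    · nlinarith
  · left; constructor <;> linarith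
  · right; constructor <;> linarith

theorem Fintype.existsUnique_of_count_map_univ_eq_one {ι α : Type*} [Fintype ι] [DecidableEq α]
    {f : ι → α} {a : α} (h : (univ.val.map f).count a = 1) : ∃! i, f i = a := by
  rw [Fintype.existsUnique_iff_card_one, ← h, Multiset.count_map]
  simp only [eq_comm]
  rfl

theorem Multiset.eq_pair_of_nodup {α : Type*} {s : Multiset α} {a b : α} (hs : s.Nodup)
    (h : ∀ x ∈ s, x = a ∨ x = b) (hcard : 2 ≤ card s) : a ≠ b ∧ s = {a, b} := by
  have hle : s ≤ {a, b} := (Multiset.le_iff_subset hs).mpr fun x hx ↦ by simpa using h x hx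
  have hs_eq : s = {a, b} := Multiset.eq_of_le_of_card_le hle (by simpa using hcard)
  refine ⟨fun hab ↦ ?_, hs_eq⟩
  rw [hs_eq, hab] at hs
  simp at hs

/-- The conjugates of `α` are roots of `p` that are not integers, so they are `α` and `β`. -/
theorem minpoly_int_map_eq_of_roots {p : ℤ[X]} (hp : p.Monic)
    (hsplit : (p.map (Int.castRingHom ℝ)).Splits) {α β : ℝ} (hα : aeval α p = 0)
    (hαZ : ∀ z : ℤ, (z : ℝ) ≠ α)
    (hroots : ∀ x : ℝ, aeval x p = 0 → (∃ z : ℤ, (z : ℝ) = x) ∨ x = α ∨ x = β) :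
    α ≠ β ∧ (minpoly ℤ α).map (Int.castRingHom ℝ) = (X - C α) * (X - C β) := by
  have hint : IsIntegral ℤ α := ⟨p, hp, hα⟩
  have hmonic := minpoly.monic hint
  have hdeg : 2 ≤ (minpoly ℤ α).natDegree :=
    (minpoly.two_le_natDegree_iff hint).mpr (by rintro ⟨z, rfl⟩; exact hαZ z rfl)
  have hQ : minpoly ℚ α = (minpoly ℤ α).map (algebraMap ℤ ℚ) :=
    minpoly.isIntegrallyClosed_eq_field_fractions' ℚ hint
  have hR : (minpoly ℤ α).map (Int.castRingHom ℝ) = (minpoly ℚ α).map (algebraMap ℚ ℝ) := by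
    rw [hQ, Polynomial.map_map]
    congr 1
  set q := (minpoly ℤ α).map (Int.castRingHom ℝ)
  have hdvd : q ∣ p.map (Int.castRingHom ℝ) :=
    Polynomial.map_dvd _ (minpoly.isIntegrallyClosed_dvd hint hα)
  have hq_splits : q.Splits := hsplit.of_dvd (hp.map _).ne_zero hdvd
  have hnodup : q.roots.Nodup := by
    rw [hR]
    exact nodup_roots (minpoly.irreducible hint.tower_top).separable.map
  have hroots_q : ∀ x ∈ q.roots, x = α ∨ x = β := by
    intro x hx
    have hxp : aeval x p = 0 := by
      rw [aeval_def, eval₂_eq_eval_map]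
      exact isRoot_of_mem_roots (Multiset.mem_of_le (roots.le_of_dvd (hp.map _).ne_zero hdvd) hx)
    rcases hroots x hxp with ⟨z, rfl⟩ | h | h
    · have hxq : aeval (z : ℝ) (minpoly ℚ α) = 0 := by
        rw [aeval_def, eval₂_eq_eval_map, ← hR]
        exact isRoot_of_mem_roots hx
      have h1 : (minpoly ℚ (z : ℝ)).natDegree = 1 :=
        minpoly.natDegree_eq_one_iff.mpr ⟨z, by simp⟩
      rw [← minpoly.eq_of_irreducible_of_monic (minpoly.irreducible hint.tower_top) hxq
        (minpoly.monic hint.tower_top), hQ, hmonic.natDegree_map] at h1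
      omega
    · exact Or.inl h
    · exact Or.inr h
  have hcard : 2 ≤ Multiset.card q.roots := by
    rwa [← hq_splits.natDegree_eq_card_roots, hmonic.natDegree_map]
  obtain ⟨hne, hpair⟩ := Multiset.eq_pair_of_nodup hnodup hroots_q hcard
  refine ⟨hne, ?_⟩
  rw [hq_splits.eq_prod_roots_of_monic (hmonic.map _), hpair]
  simp

namespace Matrix.IsHermitian

variable {ι : Type*} [Fintype ι] [DecidableEq ι] {A : Matrix ι ι ℝ}

lemma aeval_eq_conj_diagonal (hA : A.IsHermitian) (p : ℝ[X]) :
    aeval A p = (hA.eigenvectorUnitary : Matrix ι ι ℝ) *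
      diagonal (fun i ↦ p.eval (hA.eigenvalues i)) *
        star (hA.eigenvectorUnitary : Matrix ι ι ℝ) := by
  rw [← cfc_polynomial p A hA.isSelfAdjoint, hA.cfc_eq, IsHermitian.cfc,
    Unitary.conjStarAlgAut_apply]
  rfl

lemma aeval_apply_self (hA : A.IsHermitian) (p : ℝ[X]) (u : ι) :
    aeval A p u u = ∑ i, p.eval (hA.eigenvalues i) * hA.eigenvectorBasis i u ^ 2 := by
  rw [hA.aeval_eq_conj_diagonal, mul_apply]
  refine Finset.sum_congr rfl fun i _ ↦ ?_
  simp [mul_diagonal, sq]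
  ring

lemma sum_eigenvectorBasis_sq (hA : A.IsHermitian) (i : ι) :
    ∑ u, hA.eigenvectorBasis i u ^ 2 = 1 := by
  simpa [Matrix.mul_apply, sq] using
    congrFun₂ (Unitary.coe_star_mul_self hA.eigenvectorUnitary) i i

lemma trace_aeval (hA : A.IsHermitian) (p : ℝ[X]) :
    (aeval A p).trace = ∑ i, p.eval (hA.eigenvalues i) := by
  simp only [trace, diag, hA.aeval_apply_self]
  rw [Finset.sum_comm]
  simp [← Finset.mul_sum, hA.sum_eigenvectorBasis_sq]

lemma trace_aeval_eq_sum_roots (hA : A.IsHermitian) (p : ℝ[X]) :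
    (aeval A p).trace = (A.charpoly.roots.map fun x ↦ p.eval x).sum := by
  rw [hA.trace_aeval, hA.roots_charpoly_eq_eigenvalues, Multiset.map_map,
    Finset.sum_eq_multiset_sum]
  rfl

lemma star_eigenvectorUnitary_mul_self (hA : A.IsHermitian) :
    star (hA.eigenvectorUnitary : Matrix ι ι ℝ) * A =
      diagonal hA.eigenvalues * star (hA.eigenvectorUnitary : Matrix ι ι ℝ) := by
  have h := hA.conjStarAlgAut_star_eigenvectorUnitary
  rw [Unitary.conjStarAlgAut_apply, Unitary.coe_star, star_star] at h
  calc _ = star (hA.eigenvectorUnitary : Matrix ι ι ℝ) * A * hA.eigenvectorUnitary *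
        star (hA.eigenvectorUnitary : Matrix ι ι ℝ) := by simp [mul_assoc]
    _ = _ := by rw [h]; simp

lemma exists_eq_smul_eigenvectorBasis (hA : A.IsHermitian) {y : ι → ℝ} {i₀ : ι}
    (hy : A *ᵥ y = hA.eigenvalues i₀ • y)
    (hsimple : ∀ i, hA.eigenvalues i = hA.eigenvalues i₀ → i = i₀) :
    ∃ s : ℝ, y = s • ⇑(hA.eigenvectorBasis i₀) := by
  have hconj := congrArg (star (hA.eigenvectorUnitary : Matrix ι ι ℝ) *ᵥ ·) hy
  simp only [mulVec_mulVec, hA.star_eigenvectorUnitary_mul_self] at hconj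
  rw [← mulVec_mulVec, mulVec_smul] at hconj
  set U : Matrix ι ι ℝ := ↑hA.eigenvectorUnitary
  set z := star U *ᵥ y
  have hz : z = Pi.single i₀ (z i₀) := by
    ext i
    by_cases hi : i = i₀
    · subst hi; simp
    · have h : (hA.eigenvalues i - hA.eigenvalues i₀) * z i = 0 := by
        linear_combination (by simpa [mulVec_diagonal] using congrFun hconj i :
          hA.eigenvalues i * z i = hA.eigenvalues i₀ * z i)
      simpa [Pi.single_apply, hi, sub_eq_zero] using
        (mul_eq_zero.mp h).resolve_left (sub_ne_zero.mpr fun h ↦ hi (hsimple i h))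
  refine ⟨z i₀, ?_⟩
  calc y = U *ᵥ z := by simp [U, z, mulVec_mulVec]
    _ = _ := by rw [hz, mulVec_single]; ext u; simp [U, mul_comm]

end Matrix.IsHermitian

namespace SimpleGraph

variable {V : Type*} (G : SimpleGraph V) [DecidableRel G.Adj]

theorem map_intCast_adjMatrix : (G.adjMatrix ℤ).map (Int.castRingHom ℝ) = G.adjMatrix ℝ := by
  ext u v
  simp [adjMatrix_apply, apply_ite]

variable [Fintype V]

theorem eigenvalue_eq_degree_sub_two_mul_card {x : V → ℝ} {μ : ℝ}
    (hx : G.adjMatrix ℝ *ᵥ x = μ • x) {u : V} (hu : x u ≠ 0) (habs : ∀ v, x v ^ 2 = x u ^ 2) :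
    μ = G.degree u - 2 * #{v ∈ G.neighborFinset u | x v ≠ x u} := by
  have hterm : ∀ v, x v = x u - if x v ≠ x u then 2 * x u else 0 := by
    intro v
    split_ifs with h
    · linarith [(sq_eq_sq_iff_eq_or_eq_neg.mp (habs v)).resolve_left h]
    · simpa using h
  have hsum := congrFun hx u
  rw [adjMatrix_mulVec_apply, Finset.sum_congr rfl fun v _ ↦ hterm v, Finset.sum_sub_distrib,
    Finset.sum_ite, Finset.sum_const_zero, add_zero, Finset.sum_const, Finset.sum_const,
    card_neighborFinset_eq_degree, Pi.smul_apply, smul_eq_mul] at hsum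
  simp only [nsmul_eq_mul] at hsum
  apply mul_right_cancel₀ hu
  linear_combination -hsum

variable [DecidableEq V]

theorem sum_roots_charpoly_adjMatrix : (G.adjMatrix ℝ).charpoly.roots.sum = 0 := by
  simpa [trace_adjMatrix] using ((G.isHermitian_adjMatrix ℝ).trace_aeval_eq_sum_roots X).symm

theorem card_roots_charpoly_adjMatrix :
    Multiset.card (G.adjMatrix ℝ).charpoly.roots = Fintype.card V := by
  simp [(G.isHermitian_adjMatrix ℝ).roots_charpoly_eq_eigenvalues]

theorem aeval_charpoly_adjMatrix_int_eq_zero_iff {x : ℝ} :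
    aeval x (G.adjMatrix ℤ).charpoly = 0 ↔ x ∈ (G.adjMatrix ℝ).charpoly.roots := by
  rw [mem_roots (charpoly_monic _).ne_zero, ← map_intCast_adjMatrix, charpoly_map, IsRoot,
    aeval_def, eval₂_eq_eval_map]
  rfl

theorem irrational_of_mem_roots_charpoly_adjMatrix {x : ℝ}
    (hx : x ∈ (G.adjMatrix ℝ).charpoly.roots) (hxZ : ∀ z : ℤ, (z : ℝ) ≠ x) : Irrational x := by
  rintro ⟨q, rfl⟩
  have hint : IsIntegral ℤ (q : ℝ) :=
    ⟨_, charpoly_monic _, (G.aeval_charpoly_adjMatrix_int_eq_zero_iff).mpr hx⟩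
  obtain ⟨z, hz⟩ := (IsIntegral.exists_int_iff_exists_rat hint).mp ⟨q, rfl⟩
  exact hxZ z hz.symm

variable {G}

theorem IsRegularOfDegree.sum_sq_roots_charpoly_adjMatrix {k : ℕ}
    (hreg : G.IsRegularOfDegree k) :
    ((G.adjMatrix ℝ).charpoly.roots.map fun x ↦ x ^ 2).sum = (Fintype.card V * k : ℝ) := by
  have h := (G.isHermitian_adjMatrix ℝ).trace_aeval_eq_sum_roots (X ^ 2)
  simp only [map_pow, aeval_X, eval_pow, eval_X] at h
  rw [← h, trace]
  simp only [Matrix.diag, sq, adjMatrix_mul_self_apply_self, hreg.degree_eq, sum_const,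
    card_univ, nsmul_eq_mul]

theorem IsRegularOfDegree.exists_eigenvectorBasis_eq_const {k : ℕ}
    (hreg : G.IsRegularOfDegree k) {i₀ : V}
    (hi₀ : (G.isHermitian_adjMatrix ℝ).eigenvalues i₀ = k)
    (hsimple : ∀ i, (G.isHermitian_adjMatrix ℝ).eigenvalues i = k → i = i₀) :
    ∃ t, ∀ u, (G.isHermitian_adjMatrix ℝ).eigenvectorBasis i₀ u = t := by
  obtain ⟨s, hs⟩ := (G.isHermitian_adjMatrix ℝ).exists_eq_smul_eigenvectorBasis
    (y := fun _ ↦ 1) (by ext v; simp [hreg v, hi₀]) fun i h ↦ hsimple i (h.trans hi₀)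
  exact ⟨s⁻¹, fun u ↦ eq_inv_of_mul_eq_one_right (congrFun hs u).symm⟩

theorem IsRegularOfDegree.exists_eigenvectorBasis_sq_eq {k : ℕ} (hreg : G.IsRegularOfDegree k)
    {s : Multiset ℝ} {c : ℝ} (hc : c ≠ 0)
    (hroots : (G.adjMatrix ℝ).charpoly.roots = {(k : ℝ), -1} + s) (hk : (k : ℝ) ∉ s)
    (hs : ∀ x ∈ s, x ^ 2 + x + c = 0) :
    ∃ i₁, (G.isHermitian_adjMatrix ℝ).eigenvalues i₁ = -1 ∧ ∀ u v,
      (G.isHermitian_adjMatrix ℝ).eigenvectorBasis i₁ u ^ 2 =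
        (G.isHermitian_adjMatrix ℝ).eigenvectorBasis i₁ v ^ 2 := by
  set hA := G.isHermitian_adjMatrix ℝ
  have hev : univ.val.map hA.eigenvalues = {(k : ℝ), -1} + s := by
    rw [← hroots, hA.roots_charpoly_eq_eigenvalues]
    simp
  have hk1 : (k : ℝ) ≠ -1 := fun h ↦ by linarith [k.cast_nonneg (α := ℝ)]
  have h1s : (-1 : ℝ) ∉ s := fun h ↦ hc (by linarith [hs _ h])
  obtain ⟨i₀, hi₀, hi₀u⟩ : ∃! i, hA.eigenvalues i = k :=
    Fintype.existsUnique_of_count_map_univ_eq_one (by simp [hev, hk, hk1])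
  obtain ⟨i₁, hi₁, hi₁u⟩ : ∃! i, hA.eigenvalues i = -1 :=
    Fintype.existsUnique_of_count_map_univ_eq_one (by simp [hev, h1s, hk1.symm])
  have hq : ∀ i ∉ ({i₀, i₁} : Finset V), eval (hA.eigenvalues i) (X ^ 2 + X + C c) = 0 := by
    intro i hi
    have hmem : hA.eigenvalues i ∈ {(k : ℝ), -1} + s :=
      hev ▸ Multiset.mem_map_of_mem _ (mem_univ_val i)
    simp only [mem_insert, mem_singleton, not_or] at hi
    simp only [Multiset.insert_eq_cons, Multiset.cons_add, Multiset.mem_cons,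
      Multiset.singleton_add] at hmem
    rcases hmem with h | h | h
    · exact absurd (hi₀u i h) hi.1
    · exact absurd (hi₁u i h) hi.2
    · simpa using hs _ h
  have hi01 : i₀ ≠ i₁ := fun h ↦ hk1 (hi₀.symm.trans (h ▸ hi₁))
  obtain ⟨t, ht⟩ := hreg.exists_eigenvectorBasis_eq_const hi₀ hi₀u
  -- the diagonal of `A ^ 2 + A + c`, computed in the graph and spectrally
  have hdiag : ∀ u, (k : ℝ) + c = (k ^ 2 + k + c) * t ^ 2 + c * hA.eigenvectorBasis i₁ u ^ 2 := by
    intro u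
    have h := hA.aeval_apply_self (X ^ 2 + X + C c) u
    rw [← Finset.sum_subset (subset_univ _) fun i _ hi ↦ by rw [hq i hi, zero_mul],
      sum_pair hi01, hi₀, hi₁, ht] at h
    simp only [map_add, map_pow, aeval_X, aeval_C, Matrix.add_apply, sq (adjMatrix ℝ G),
      adjMatrix_mul_self_apply_self, hreg u] at h
    simpa [algebraMap_matrix_apply] using h
  exact ⟨i₁, hi₁, fun u v ↦ mul_left_cancel₀ hc (by linarith [hdiag u, hdiag v])⟩

theorem IsRegularOfDegree.odd_of_charpoly_roots {k : ℕ} (hreg : G.IsRegularOfDegree k)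
    {s : Multiset ℝ} {c : ℝ} (hc : c ≠ 0)
    (hroots : (G.adjMatrix ℝ).charpoly.roots = {(k : ℝ), -1} + s) (hk : (k : ℝ) ∉ s)
    (hs : ∀ x ∈ s, x ^ 2 + x + c = 0) : Odd k := by
  obtain ⟨i, hi, hsq⟩ := hreg.exists_eigenvectorBasis_sq_eq hc hroots hk hs
  set x := (G.isHermitian_adjMatrix ℝ).eigenvectorBasis i
  obtain ⟨u, hu⟩ : ∃ u, x u ≠ 0 := by
    by_contra! h
    simpa [x, h] using (G.isHermitian_adjMatrix ℝ).sum_eigenvectorBasis_sq i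
  have h := G.eigenvalue_eq_degree_sub_two_mul_card
    ((G.isHermitian_adjMatrix ℝ).mulVec_eigenvectorBasis i) hu fun v ↦ hsq v u
  rw [hi, hreg u] at h
  set j := #{v ∈ G.neighborFinset u | x v ≠ x u}
  have hj : k + 1 = 2 * j := by exact_mod_cast (by linarith : (k : ℝ) + 1 = 2 * j)
  exact ⟨j - 1, by omega⟩

theorem exists_int_add_mul_of_charpoly_roots {k m m' : ℕ} {α β : ℝ}
    (hroots : (G.adjMatrix ℝ).charpoly.roots =
      {(k : ℝ), -1} + Multiset.replicate m α + Multiset.replicate m' β)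
    (hm : m ≠ 0) (hαZ : ∀ z : ℤ, (z : ℝ) ≠ α) :
    α ≠ β ∧ ∃ a b : ℤ, (a : ℝ) = α + β ∧ (b : ℝ) = α * β := by
  have hsplit : ((G.adjMatrix ℤ).charpoly.map (Int.castRingHom ℝ)).Splits := by
    rw [← charpoly_map, map_intCast_adjMatrix]
    exact (G.isHermitian_adjMatrix ℝ).splits_charpoly
  have hα : aeval α (G.adjMatrix ℤ).charpoly = 0 :=
    (G.aeval_charpoly_adjMatrix_int_eq_zero_iff).mpr (by simp [hroots, Multiset.mem_replicate, hm])
  obtain ⟨hne, h⟩ := minpoly_int_map_eq_of_roots (β := β) (charpoly_monic _) hsplit hα hαZ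
    fun x hx ↦ by
      rw [aeval_charpoly_adjMatrix_int_eq_zero_iff, hroots] at hx
      simp only [Multiset.insert_eq_cons, Multiset.cons_add, Multiset.singleton_add,
        Multiset.mem_cons, Multiset.mem_add, Multiset.mem_replicate] at hx
      rcases hx with rfl | rfl | ⟨-, rfl⟩ | ⟨-, rfl⟩
      · exact Or.inl ⟨k, by simp⟩
      · exact Or.inl ⟨-1, by simp⟩
      · exact Or.inr (Or.inl rfl)
      · exact Or.inr (Or.inr rfl)
  have h0 := congrArg (eval 0) h
  have h1 := congrArg (eval 1) h
  simp only [eval_zero_map, eval_one_map, eval_mul, eval_sub, eval_X, eval_C, eq_intCast] at h0 h1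
  refine ⟨hne, 1 + (minpoly ℤ α).eval 0 - (minpoly ℤ α).eval 1, (minpoly ℤ α).eval 0, ?_, ?_⟩
  · push_cast
    linear_combination h0 - h1
  · linear_combination h0

theorem IsRegularOfDegree.trace_identities {k m m' : ℕ} {α β : ℝ} (hreg : G.IsRegularOfDegree k)
    (hroots : (G.adjMatrix ℝ).charpoly.roots =
      {(k : ℝ), -1} + Multiset.replicate m α + Multiset.replicate m' β) :
    (k : ℝ) - 1 + m * α + m' * β = 0 ∧
      (k : ℝ) ^ 2 + 1 + m * α ^ 2 + m' * β ^ 2 = (m + m' + 2) * k := by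
  have h1 := G.sum_roots_charpoly_adjMatrix
  have h2 := hreg.sum_sq_roots_charpoly_adjMatrix
  rw [← G.card_roots_charpoly_adjMatrix] at h2
  rw [hroots] at h1 h2
  simp only [Multiset.insert_eq_cons, Multiset.cons_add, Multiset.singleton_add,
    Multiset.sum_cons, Multiset.map_cons, Multiset.map_add, Multiset.sum_add,
    Multiset.map_replicate, Multiset.sum_replicate, Multiset.card_cons, Multiset.card_add,
    Multiset.card_replicate, nsmul_eq_mul] at h1 h2
  push_cast at h2
  constructor
  · linear_combination h1
  · linear_combination h2

theorem IsRegularOfDegree.exists_int_of_charpoly_roots {k m m' : ℕ} {α β : ℝ}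
    (hreg : G.IsRegularOfDegree k)
    (hroots : (G.adjMatrix ℝ).charpoly.roots =
      {(k : ℝ), -1} + Multiset.replicate m α + Multiset.replicate m' β)
    (hm : m ≠ 0) (hαZ : ∀ z : ℤ, (z : ℝ) ≠ α) :
    ∃ b : ℤ, α + β = -1 ∧ (b : ℝ) = α * β ∧ 2 * b = -k ∧ k ≠ 0 := by
  obtain ⟨hαβ, a, b, ha, hb⟩ := exists_int_add_mul_of_charpoly_roots hroots hm hαZ
  have hαQ : Irrational α := G.irrational_of_mem_roots_charpoly_adjMatrix
    (by simp [hroots, Multiset.mem_replicate, hm]) hαZ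
  obtain ⟨h1, h2⟩ := hreg.trace_identities hroots
  obtain rfl : m = m' := by
    by_contra hne
    have hd : (m : ℝ) - m' ≠ 0 := sub_ne_zero.mpr (by exact_mod_cast hne)
    refine hαQ ⟨(1 - k - m' * a) / (m - m'), ?_⟩
    push_cast
    rw [div_eq_iff hd, ha]
    linear_combination -h1
  have E1 : (k : ℤ) - 1 + m * a = 0 := by
    exact_mod_cast (by linear_combination h1 + (m : ℝ) * ha : (k : ℝ) - 1 + m * a = 0)
  have E2 : (k : ℤ) ^ 2 + 1 + m * (a ^ 2 - 2 * b) = (2 * m + 2) * k := by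
    have : (k : ℝ) ^ 2 + 1 + m * (a ^ 2 - 2 * b) = (2 * m + 2) * k := by
      rw [ha, hb]
      linear_combination h2
    exact_mod_cast this
  have hD : 0 < a ^ 2 - 4 * b := by
    have : (0 : ℝ) < a ^ 2 - 4 * b := by
      rw [ha, hb]
      nlinarith [sq_pos_of_ne_zero (sub_ne_zero.mpr hαβ)]
    exact_mod_cast this
  rcases Int.eq_of_trace_identities (by omega) E1 E2 hD with ⟨rfl, rfl⟩ | ⟨rfl, hb2⟩
  · have : (α - 1) * (α + 1) = 0 := by
      push_cast at ha hb
      linear_combination (-α) * ha + hb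
    rcases mul_eq_zero.mp this with h | h
    · exact absurd (by push_cast; linarith) (hαZ 1)
    · exact absurd (by push_cast; linarith) (hαZ (-1))
  · exact ⟨b, by push_cast at ha; linarith, hb, hb2, by omega⟩

end SimpleGraph

theorem adjm_eq_adjMatrix {V : Type*} [Fintype V] [DecidableEq V] (G : SimpleGraph V)
    [DecidableRel G.Adj] : adjm G = G.adjMatrix ℝ := by
  unfold adjm
  congr

theorem IsReg.isRegularOfDegree {V : Type*} [Fintype V] {G : SimpleGraph V} [DecidableRel G.Adj]
    {k : ℕ} (h : IsReg G k) : G.IsRegularOfDegree k := fun v ↦ by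
  rw [← h v, Set.ncard_eq_toFinset_card', ← G.card_neighborFinset_eq_degree]
  rfl

/-- There is no connected `k`-regular graph with spectrum
`{[k]^1, [-1]^1, [α]^m, [β]^{n-2-m}}` where `α` and `β` are not integers and
`2 ≤ m ≤ n - 4`. -/
theorem stmt_13 :
    ¬ ∃ (n k m : ℕ) (G : SimpleGraph (Fin n)) (al be : ℝ),
      G.Connected ∧ IsReg G k ∧
      2 ≤ m ∧ m ≤ n - 4 ∧
      (∀ z : ℤ, (z : ℝ) ≠ al) ∧ (∀ z : ℤ, (z : ℝ) ≠ be) ∧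
      spec G = {(k : ℝ), (-1 : ℝ)} + Multiset.replicate m al +
        Multiset.replicate (n - 2 - m) be := by
  rintro ⟨n, k, m, G, α, β, -, hreg, hm, -, hαZ, hβZ, hspec⟩
  classical
  rw [spec, adjm_eq_adjMatrix] at hspec
  obtain ⟨b, hsum, hb, hbk, hk⟩ :=
    hreg.isRegularOfDegree.exists_int_of_charpoly_roots hspec (by omega) hαZ
  have hk_root : (k : ℝ) ∉ Multiset.replicate m α + Multiset.replicate (n - 2 - m) β := by
    simp only [Multiset.mem_add, Multiset.mem_replicate, not_or, not_and]
    exact ⟨fun _ ↦ by exact_mod_cast hαZ k, fun _ ↦ by exact_mod_cast hβZ k⟩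
  have hquad : ∀ x ∈ Multiset.replicate m α + Multiset.replicate (n - 2 - m) β,
      x ^ 2 + x + α * β = 0 := by
    simp only [Multiset.mem_add, Multiset.mem_replicate]
    rintro x (⟨-, rfl⟩ | ⟨-, rfl⟩) <;> linear_combination x * hsum
  obtain ⟨j, rfl⟩ := hreg.isRegularOfDegree.odd_of_charpoly_roots
    (by rw [← hb]; exact_mod_cast (by omega : b ≠ 0)) (hspec.trans (add_assoc _ _ _)) hk_root hquad
  push_cast at hbk
  omega
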